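/- Let L ⊆ R with (D ∩ L) ∖ {max L} ≠ ∅. Then every consistent axiom system 𝒜 satisfying 𝒜 ∼ 𝒜_L ∪ {τ^𝒜} is equivalent to 𝒜_L, and for such 𝒜 the set of 𝒜-p-surprising days is exactly (D ∩ L) ∖ {max L}. -/

import Mathlib

open scoped Classical

/-- Propositional formulas over the six variables `Y_r`, `r ∈ R = Fin 6`
(`0 = Mo, 1 = Tu, 2 = We, 3 = Th, 4 = Fr, 5 = none`). -/
inductive Form : Type where
  | bot : Form
  | var : Fin 6 → Form
  | imp : Form → Form → Form
deriving DecidableEq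

def Form.neg (φ : Form) : Form := φ.imp .bot
def Form.top : Form := Form.neg .bot
def Form.or (φ ψ : Form) : Form := φ.neg.imp ψ
def Form.and (φ ψ : Form) : Form := (φ.imp ψ.neg).neg

/-- Evaluation in the model `r ∈ R`: variable `Y_i` is true iff `i = r`. -/
def Form.eval (r : Fin 6) : Form → Bool
  | .bot => false
  | .var i => decide (i = r)
  | .imp φ ψ => !(Form.eval r φ) || Form.eval r ψ

/-- `r ⊨ φ`. -/
def Sat (r : Fin 6) (φ : Form) : Prop := Form.eval r φ = true

def bigOr (l : List Form) : Form := l.foldr Form.or .bot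
def bigAnd (l : List Form) : Form := l.foldr Form.and Form.top

/-- `χ_B = ⋁_{r ∈ B} Y_r`. -/
def chi (B : Finset (Fin 6)) : Form := bigOr ((B.sort (· ≤ ·)).map Form.var)

/-- The axiom `(Ax_{=1})`: exactly one of the variables `Y_r` is true. -/
def Ax1 : Form :=
  (chi Finset.univ).and
    (bigAnd ((List.finRange 6).flatMap (fun i =>
      (List.finRange 6).map (fun j =>
        if i = j then Form.top else ((Form.var i).neg).or ((Form.var j).neg)))))

/-- Provability from the axiom system `A` (by soundness and completeness of
propositional logic, semantic consequence over the six models). -/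
def Proves (A : Set Form) (φ : Form) : Prop :=
  ∀ r : Fin 6, (∀ ψ ∈ A, Sat r ψ) → Sat r φ

/-- `K` is an `A`-p-knowledge set: `A ⊢ ⟨T ∈ K⟩`. -/
def KSet (A : Set Form) (K : Finset (Fin 6)) : Prop := Proves A (chi K)

/-- `K_A`, the intersection of all `A`-p-knowledge sets. -/
noncomputable def KA (A : Set Form) : Finset (Fin 6) :=
  Finset.univ.filter (fun r => ∀ K : Finset (Fin 6), KSet A K → r ∈ K)

/-- The days `D = {Mo,…,Fr}`. -/
def DaysF : Finset (Fin 6) := {0, 1, 2, 3, 4}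

/-- `⟨T ≤ d⟩`. -/
def TLe (d : Fin 6) : Form := chi (Finset.univ.filter (· ≤ d))
/-- `⟨T ≥ d⟩`. -/
def TGe (d : Fin 6) : Form := chi (Finset.univ.filter (d ≤ ·))
/-- `⟨T = d⟩`. -/
def TEq (d : Fin 6) : Form := Form.var d

/-- Equivalence of axiom systems: mutual provability. -/
def EquivAx (A₁ A₂ : Set Form) : Prop :=
  (∀ φ ∈ A₂, Proves A₁ φ) ∧ (∀ φ ∈ A₁, Proves A₂ φ)

/-- Iverson bracket: `⊤` if `P` holds, else `⊥`. -/
noncomputable def iver (P : Prop) : Form := if P then Form.top else Form.bot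

/-- The maximum of `K` (with default `Mo` for `K = ∅`). -/
def maxD (K : Finset (Fin 6)) : Fin 6 := (K.max).getD 0

/-- `K ∖ {max K}` (with `∅ ∖ {max ∅} = ∅`). -/
def erasemax (K : Finset (Fin 6)) : Finset (Fin 6) := K.erase (maxD K)

/-- `σ^A := ⋀_{K ⊆ R} ([K_A ⊆ K] → χ_{K∖{max K}})`. -/
noncomputable def sigmaA (A : Set Form) : Form :=
  bigAnd (((Finset.univ : Finset (Finset (Fin 6))).toList).map
    (fun K => (iver (KA A ⊆ K)).imp (chi (erasemax K))))

/-- The set of `A`-p-surprising days. -/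
def Dsurpr (A : Set Form) : Set (Fin 6) :=
  {d | d ∈ DaysF ∧ d ∈ KA A ∧ ¬ Proves A (TLe d)}

/-- `A` is inconsistent iff it proves every formula. -/
def Inconsistent (A : Set Form) : Prop := ∀ φ, Proves A φ

/-- `τ^A := ⋁_{d ∈ D} ⋀_{K ⊆ R} ([A ⊢ χ_K] → [d ∈ K∖{max K}])`. -/
noncomputable def tauA (A : Set Form) : Form :=
  bigOr ((DaysF.sort (· ≤ ·)).map (fun d =>
    bigAnd (((Finset.univ : Finset (Finset (Fin 6))).toList).map
      (fun K => (iver (Proves A (chi K))).imp (iver (d ∈ erasemax K))))))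

/-- The axiom system `𝒜_L = {(Ax_{=1}), χ_L}`. -/
def AL (L : Finset (Fin 6)) : Set Form := {Ax1, chi L}

/-!
Provability is truth in all models `r ∈ KA A`, so an axiom system is determined up to
equivalence by `KA A`, and `KA 𝒜_L = L`. The formula `τ^A` contains no variables: its
truth value is the same in every model. A consistent `A` has a model and proves `τ^A`, so
`τ^A` is true everywhere and `KA A = KA (𝒜_L ∪ {τ^A}) = L`. Finally `A ⊢ ⟨T ≤ d⟩` iff
every model of `A` is `≤ d`, which for `d ∈ KA A` means `d = max (KA A)`.
-/

section Semantics

variable (r : Fin 6)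

lemma sat_imp (φ ψ : Form) : Sat r (φ.imp ψ) ↔ (Sat r φ → Sat r ψ) := by
  cases h : Form.eval r φ <;> simp [Sat, Form.eval, h]

lemma sat_bot : ¬ Sat r Form.bot := Bool.false_ne_true

lemma sat_top : Sat r Form.top := rfl

lemma sat_neg (φ : Form) : Sat r φ.neg ↔ ¬ Sat r φ := by
  simp [Form.neg, sat_imp, sat_bot]

lemma sat_or (φ ψ : Form) : Sat r (φ.or ψ) ↔ Sat r φ ∨ Sat r ψ := by
  simp only [Sat, Form.or, Form.neg, Form.eval]
  cases Form.eval r φ <;> simp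

lemma sat_and (φ ψ : Form) : Sat r (φ.and ψ) ↔ Sat r φ ∧ Sat r ψ := by
  simp only [Sat, Form.and, Form.neg, Form.eval]
  cases Form.eval r φ <;> simp

lemma sat_bigOr (l : List Form) : Sat r (bigOr l) ↔ ∃ φ ∈ l, Sat r φ := by
  induction l with
  | nil => simp [bigOr, Sat, Form.eval]
  | cons φ l ih => simp only [bigOr, List.foldr_cons] at ih ⊢; simp [sat_or, ih]

lemma sat_bigAnd (l : List Form) : Sat r (bigAnd l) ↔ ∀ φ ∈ l, Sat r φ := by
  induction l with
  | nil => simp [bigAnd, sat_top]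
  | cons φ l ih => simp only [bigAnd, List.foldr_cons] at ih ⊢; simp [sat_and, ih]

lemma sat_var (i : Fin 6) : Sat r (Form.var i) ↔ i = r := by
  simp [Sat, Form.eval]

lemma sat_iver (P : Prop) : Sat r (iver P) ↔ P := by
  by_cases hP : P <;> simp [iver, hP, sat_top, sat_bot]

lemma sat_chi (B : Finset (Fin 6)) : Sat r (chi B) ↔ r ∈ B := by
  simp [chi, sat_bigOr, sat_var]

lemma sat_Ax1 : Sat r Ax1 := by
  rw [Ax1, sat_and, sat_chi, sat_bigAnd]
  refine ⟨Finset.mem_univ r, ?_⟩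
  simp only [List.mem_flatMap, List.mem_map, List.mem_finRange, true_and]
  rintro φ ⟨i, j, rfl⟩
  split_ifs with hij
  · exact sat_top r
  · rw [sat_or, sat_neg, sat_neg, sat_var, sat_var]
    by_cases hi : i = r
    · exact Or.inr fun hj => hij (hi.trans hj.symm)
    · exact Or.inl fun h => absurd h hi

end Semantics

section Models

variable {A B : Set Form}

lemma mem_KA_iff {r : Fin 6} : r ∈ KA A ↔ ∀ ψ ∈ A, Sat r ψ := by
  rw [KA, Finset.mem_filter_univ]
  refine ⟨fun h ψ hψA => ?_, fun h K hK => (sat_chi r K).1 (hK r h)⟩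
  by_contra hψ
  -- a model `r` falsifying an axiom would make `R ∖ {r}` a knowledge set
  have hK : Proves A (chi (Finset.univ.erase r)) := fun s hs =>
    (sat_chi s _).2 (Finset.mem_erase.2 ⟨fun hsr => hψ (hsr ▸ hs ψ hψA), Finset.mem_univ s⟩)
  exact Finset.notMem_erase r _ (h _ hK)

lemma proves_iff_forall_mem_KA {φ : Form} : Proves A φ ↔ ∀ r ∈ KA A, Sat r φ := by
  simp only [Proves, mem_KA_iff]

lemma proves_chi_iff {K : Finset (Fin 6)} : Proves A (chi K) ↔ KA A ⊆ K := by
  simp only [proves_iff_forall_mem_KA, sat_chi]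
  rfl

lemma inconsistent_iff_KA_eq_empty : Inconsistent A ↔ KA A = ∅ := by
  refine ⟨fun h => ?_, fun h φ => proves_iff_forall_mem_KA.2 (by simp [h])⟩
  simpa using proves_chi_iff.1 (h (chi ∅))

lemma KA_subset_of_forall_proves (h : ∀ φ ∈ B, Proves A φ) : KA A ⊆ KA B :=
  fun r hr => mem_KA_iff.2 fun φ hφ => proves_iff_forall_mem_KA.1 (h φ hφ) r hr

lemma equivAx_iff_KA_eq : EquivAx A B ↔ KA A = KA B := by
  refine ⟨fun h => (KA_subset_of_forall_proves h.1).antisymm (KA_subset_of_forall_proves h.2),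
    fun h => ⟨fun φ hφ => ?_, fun φ hφ => ?_⟩⟩
  · exact proves_iff_forall_mem_KA.2 fun r hr => mem_KA_iff.1 (h ▸ hr) φ hφ
  · exact proves_iff_forall_mem_KA.2 fun r hr => mem_KA_iff.1 (h.symm ▸ hr) φ hφ

lemma KA_union_singleton (φ : Form) : KA (B ∪ {φ}) = (KA B).filter (Sat · φ) := by
  ext r
  simp [mem_KA_iff, or_imp, forall_and, and_comm]

lemma KA_AL (L : Finset (Fin 6)) : KA (AL L) = L := by
  ext r
  simp [mem_KA_iff, AL, sat_Ax1, sat_chi]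

end Models

lemma sat_tauA_iff {A : Set Form} (r : Fin 6) :
    Sat r (tauA A) ↔ ∃ d ∈ DaysF, ∀ K : Finset (Fin 6), Proves A (chi K) → d ∈ erasemax K := by
  simp [tauA, sat_bigOr, sat_bigAnd, sat_imp, sat_iver]

lemma KA_eq_of_equivAx_AL_union_tauA {L : Finset (Fin 6)} {A : Set Form}
    (hcons : ¬ Inconsistent A) (heq : EquivAx A (AL L ∪ {tauA A})) : KA A = L := by
  rw [equivAx_iff_KA_eq, KA_union_singleton, KA_AL] at heq
  obtain ⟨r₀, hr₀⟩ := Finset.nonempty_iff_ne_empty.2 (mt inconsistent_iff_KA_eq_empty.2 hcons)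
  rw [heq, Finset.mem_filter, sat_tauA_iff] at hr₀
  rw [heq, Finset.filter_true_of_mem fun r _ => (sat_tauA_iff r).2 hr₀.2]

lemma forall_le_iff_eq_maxD {K : Finset (Fin 6)} {d : Fin 6} (hd : d ∈ K) :
    (∀ r ∈ K, r ≤ d) ↔ d = maxD K := by
  have hmax : maxD K = K.max' ⟨d, hd⟩ := by simp [maxD, ← Finset.coe_max' ⟨d, hd⟩, Option.getD]
  rw [hmax]
  exact ⟨fun h => (K.le_max' d hd).antisymm (h _ (K.max'_mem _)), fun h r hr => h ▸ K.le_max' r hr⟩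

lemma proves_TLe_iff {A : Set Form} {d : Fin 6} : Proves A (TLe d) ↔ ∀ r ∈ KA A, r ≤ d := by
  simp [TLe, proves_chi_iff, Finset.subset_iff]

lemma Dsurpr_eq (A : Set Form) : Dsurpr A = ↑((DaysF ∩ KA A).erase (maxD (KA A))) := by
  ext d
  simp only [Dsurpr, proves_TLe_iff, Set.mem_ofPred_eq, Finset.coe_erase, Finset.coe_inter,
    Set.mem_sdiff, Set.mem_inter_iff, Finset.mem_coe, Set.mem_singleton_iff, and_assoc]
  exact and_congr_right fun _ => and_congr_right fun hd => not_congr (forall_le_iff_eq_maxD hd)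

theorem stmt_12_general (L : Finset (Fin 6))
    (A : Set Form) (hcons : ¬ Inconsistent A)
    (heq : EquivAx A (AL L ∪ {tauA A})) :
    EquivAx A (AL L) ∧ Dsurpr A = ↑((DaysF ∩ L).erase (maxD L)) := by
  have hKA : KA A = L := KA_eq_of_equivAx_AL_union_tauA hcons heq
  exact ⟨equivAx_iff_KA_eq.2 (hKA.trans (KA_AL L).symm), hKA ▸ Dsurpr_eq A⟩

/-- If `(D ∩ L) ∖ {max L} ≠ ∅`, then every consistent axiom system `A` with
`A ∼ 𝒜_L ∪ {τ^A}` is equivalent to `𝒜_L`, and its set of `A`-p-surprising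
days is exactly `(D ∩ L) ∖ {max L}`. -/
theorem stmt_12 (L : Finset (Fin 6)) (h : ((DaysF ∩ L).erase (maxD L)).Nonempty)
    (A : Set Form) (hcons : ¬ Inconsistent A)
    (heq : EquivAx A (AL L ∪ {tauA A})) :
    EquivAx A (AL L) ∧ Dsurpr A = ↑((DaysF ∩ L).erase (maxD L)) :=
  stmt_12_general L A hcons heq
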